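/- Let G be a complex simply-laced semisimple algebraic group of rank r, let i = (i_1,…,i_n) ∈ [r]^n be a word, let ℓ = (ℓ_1,…,ℓ_n) ∈ ℤ_{≥0}^n, and let c = c(i) be determined from i by c_{jk} = ⟨α_{i_k}, α_{i_j}^∨⟩. If i has a subword (i_{j_0},i_{j_1},…,i_{j_s}) (with j_0 < j_1 < ⋯ < j_s) which is a hesitant jumping (ℓ_{j_0},ℓ_{j_1},…,ℓ_{j_s})-walk, then there exist σ ∈ {+,−}^n and an index k ∈ {1,…,n} such that m_{σ,k} < 0. -/

import Mathlib

open Finset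

attribute [local instance] Classical.propDecidable

/-- Distance from a vertex to a set of vertices (in `ℕ∞`; `⊤` for empty set or
unreachable vertices), i.e. `d(v, A) = min { d(v,a) : a ∈ A }`. -/
noncomputable def dSet {V : Type*} (Γ : SimpleGraph V) (v : V) (A : Set V) : ℕ∞ :=
  ⨅ a ∈ A, Γ.edist v a

/-- Cartan integers of a simply-laced group whose Dynkin diagram is the graph `Γ`:
`c̄_{a,b} = 2` if `a = b`, `-1` if `d(a,b) = 1`, and `0` otherwise. -/
noncomputable def cartan {V : Type*} (Γ : SimpleGraph V) (a b : V) : ℤ :=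
  if a = b then 2 else if Γ.edist a b = 1 then -1 else 0

/-- A word `(i 0, …, i (n-1))` is a jumping walk if `d(i j, {i 0, …, i (j-1)}) = 1`
for all `1 ≤ j < n`. -/
def IsJumpingWalk {V : Type*} (Γ : SimpleGraph V) (n : ℕ) (i : ℕ → V) : Prop :=
  ∀ j, 1 ≤ j → j < n → dSet Γ (i j) {x | ∃ k, k < j ∧ i k = x} = 1

/-- A word `(i 0, …, i (m-1))` is a hesitant jumping walk if `m ≥ 2`, `i 0 = i 1`,
and the tail `(i 1, …, i (m-1))` is a jumping walk. -/
def IsHesitantJumpingWalk {V : Type*} (Γ : SimpleGraph V) (m : ℕ) (i : ℕ → V) : Prop :=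
  2 ≤ m ∧ i 0 = i 1 ∧ IsJumpingWalk Γ (m - 1) (fun t => i (t + 1))

/-- A word `(i 0, …, i (m-1))` with nonnegative integers `(ℓ 0, …, ℓ (m-1))` is a
hesitant jumping `ℓ`-walk if it is a hesitant jumping walk and
`ℓ 0 - ℓ 1 < ℓ 1 + ⋯ + ℓ (m-1)`. -/
def IsHesitantJumpingLWalk {V : Type*} (Γ : SimpleGraph V) (m : ℕ) (i : ℕ → V)
    (ℓ : ℕ → ℤ) : Prop :=
  IsHesitantJumpingWalk Γ m i ∧ ℓ 0 - ℓ 1 < ∑ t ∈ Finset.Ico 1 m, ℓ t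

/-- The word `(i 0, …, i (n-1))` with `(ℓ 0, …, ℓ (n-1))` is
hesitant-jumping-`ℓ`-walk-avoiding if no subword (indexed by a strictly increasing
sequence `j`) is a hesitant jumping walk for the corresponding subsequence of `ℓ`. -/
def IsHJLWalkAvoiding {V : Type*} (Γ : SimpleGraph V) (n : ℕ) (i : ℕ → V)
    (ℓ : ℕ → ℤ) : Prop :=
  ¬ ∃ (m : ℕ) (j : ℕ → ℕ), StrictMono j ∧ (∀ t, t < m → j t < n) ∧
      IsHesitantJumpingLWalk Γ m (fun t => i (j t)) (fun t => ℓ (j t))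

/-- A word `(i 0, …, i (n-1))` is a diagram walk if `d(i j, i (j+1)) = 1` for all
`0 ≤ j < n - 1`. -/
def IsDiagramWalk {V : Type*} (Γ : SimpleGraph V) (n : ℕ) (i : ℕ → V) : Prop :=
  ∀ j, j + 1 < n → Γ.edist (i j) (i (j + 1)) = 1

/-- For a dominant weight `λ = Σ λ_i ϖ_i`, a word `(i 0, …, i (m-1))` is a hesitant
`λ`-walk if `m ≥ 2`, `i 0 = i 1`, the tail `(i 1, …, i (m-1))` is a diagram walk, and
`λ_{i (m-1)} > 0`. -/
def IsHesitantLamWalk {V : Type*} (Γ : SimpleGraph V) (m : ℕ) (i : ℕ → V)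
    (lam : V → ℤ) : Prop :=
  2 ≤ m ∧ i 0 = i 1 ∧ IsDiagramWalk Γ (m - 1) (fun t => i (t + 1)) ∧ 0 < lam (i (m - 1))

/-- The word `(i 0, …, i (n-1))` is hesitant-`λ`-walk-avoiding if no subword is a
hesitant `λ`-walk. -/
def IsHLamWalkAvoiding {V : Type*} (Γ : SimpleGraph V) (n : ℕ) (i : ℕ → V)
    (lam : V → ℤ) : Prop :=
  ¬ ∃ (m : ℕ) (j : ℕ → ℕ), StrictMono j ∧ (∀ t, t < m → j t < n) ∧
      IsHesitantLamWalk Γ m (fun t => i (j t)) lam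

/-- The function `A_j(x) = ℓ_j - Σ_{k > j} c_{jk} x_k` (indices `0,…,n-1`). -/
def Afun (n : ℕ) (c : ℕ → ℕ → ℤ) (ℓ : ℕ → ℤ) (j : ℕ) (x : Fin n → ℝ) : ℝ :=
  (ℓ j : ℝ) - ∑ k : Fin n, if j < (k : ℕ) then (c j (k : ℕ) : ℝ) * x k else 0

/-- The Grossberg–Karshon twisted cube
`C(c, ℓ) = {x ∈ ℝ^n | ∀ j, A_j(x) < x_j < 0 or 0 ≤ x_j ≤ A_j(x)}`. -/
def twistedCube (n : ℕ) (c : ℕ → ℕ → ℤ) (ℓ : ℕ → ℤ) : Set (Fin n → ℝ) :=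
  {x | ∀ j : Fin n,
    (Afun n c ℓ (j : ℕ) x < x j ∧ x j < 0) ∨ (0 ≤ x j ∧ x j ≤ Afun n c ℓ (j : ℕ) x)}

/-- `sgn(t) = 1` for `t < 0` and `sgn(t) = -1` for `t ≥ 0`. -/
noncomputable def gkSgn (t : ℝ) : ℝ := if t < 0 then 1 else -1

/-- The density function `ρ` of the Grossberg–Karshon twisted cube:
`ρ(x) = (-1)^n Π_k sgn(x_k)` on `C(c,ℓ)` and `0` elsewhere. -/
noncomputable def gkRho (n : ℕ) (c : ℕ → ℕ → ℤ) (ℓ : ℕ → ℤ) (x : Fin n → ℝ) : ℝ :=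
  if x ∈ twistedCube n c ℓ then (-1 : ℝ) ^ n * ∏ k : Fin n, gkSgn (x k) else 0

/-- The Grossberg–Karshon twisted cube `(C(c,ℓ), ρ)` is untwisted if `C(c,ℓ)` is a
closed convex polytope and the density function `ρ` equals `1` on `C(c,ℓ)`. -/
def IsUntwisted (n : ℕ) (c : ℕ → ℕ → ℤ) (ℓ : ℕ → ℤ) : Prop :=
  IsClosed (twistedCube n c ℓ) ∧ Convex ℝ (twistedCube n c ℓ) ∧
    (∃ S : Finset (Fin n → ℝ), twistedCube n c ℓ = convexHull ℝ (S : Set (Fin n → ℝ))) ∧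
    ∀ x ∈ twistedCube n c ℓ, gkRho n c ℓ x = 1

/-- The Cartier data `m_{σ,j}`, defined by downward recursion: `m_{σ,j} = 0` if
`σ_j = +` (here `false`), and `m_{σ,j} = ℓ_j - Σ_{k > j} c_{jk} m_{σ,k}` if
`σ_j = -` (here `true`). -/
def mSigma (n : ℕ) (c : ℕ → ℕ → ℤ) (ℓ : ℕ → ℤ) (σ : ℕ → Bool) (j : ℕ) : ℤ :=
  if σ j then
    ℓ j - ∑ k ∈ (Finset.Ico (j + 1) n).attach, c j (k : ℕ) * mSigma n c ℓ σ (k : ℕ)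
  else 0
termination_by n - j
decreasing_by
  have h := Finset.mem_Ico.mp k.2
  omega

/-! Put `σ = -` exactly on the letters of the subword, so that `m_σ` vanishes off the subword
and solves the upper triangular system given by the Cartan matrix of the subword. In a forest each
new letter of a jumping walk is adjacent to exactly one earlier letter (the earlier letters span a
subtree), so on the jumping part every column of that matrix sums to `-1` above the diagonal, and
summing the equations gives `m_σ = ℓ_{j_1} + ⋯ + ℓ_{j_s}` at the second letter. As the first two
letters coincide, `m_σ = ℓ_{j_0} - ℓ_{j_1} - (ℓ_{j_1} + ⋯ + ℓ_{j_s}) < 0` at the first letter. -/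

open SimpleGraph

section Graph

variable {V : Type*} {Γ : SimpleGraph V}

lemma dSet_le_edist {v a : V} {A : Set V} (ha : a ∈ A) : dSet Γ v A ≤ Γ.edist v a :=
  iInf₂_le a ha

lemma not_mem_of_dSet_eq_one {v : V} {A : Set V} (h : dSet Γ v A = 1) : v ∉ A := fun hv => by
  simpa [h] using dSet_le_edist (Γ := Γ) (v := v) hv

lemma exists_adj_of_dSet_eq_one {v : V} {A : Set V} (h : dSet Γ v A = 1) :
    ∃ a ∈ A, Γ.Adj v a := by
  rcases A.eq_empty_or_nonempty with rfl | ⟨a₀, ha₀⟩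
  · simp [dSet] at h
  have : Nonempty A := ⟨⟨a₀, ha₀⟩⟩
  rw [dSet, iInf_subtype'] at h
  obtain ⟨a, ha⟩ := ENat.exists_eq_iInf fun a : A => Γ.edist v a
  exact ⟨a, a.2, edist_eq_one_iff_adj.mp (ha.trans h)⟩

lemma cartan_self (a : V) : cartan Γ a a = 2 := if_pos rfl

lemma cartan_of_ne {a b : V} (h : a ≠ b) : cartan Γ a b = if Γ.Adj a b then -1 else 0 := by
  simp only [cartan, if_neg h, edist_eq_one_iff_adj]

lemma SimpleGraph.IsAcyclic.eq_of_adj_of_walk (hΓ : Γ.IsAcyclic) {v a b : V}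
    (W : Γ.Walk a b) (hv : v ∉ W.support) (ha : Γ.Adj v a) (hb : Γ.Adj v b) : a = b := by
  classical
  have hp : (Walk.cons ha W.bypass).IsPath :=
    W.bypass_isPath.cons fun h => hv (W.support_bypass_subset_support h)
  simpa using (hΓ.eq_snd_of_adj_start hp hb (by simp)).symm

end Graph

namespace IsJumpingWalk

variable {V : Type*} {Γ : SimpleGraph V} {n : ℕ} {w : ℕ → V}

lemma ne_of_lt (hw : IsJumpingWalk Γ n w) {k s : ℕ} (hks : k < s) (hsn : s < n) :
    w s ≠ w k := fun h =>
  not_mem_of_dSet_eq_one (hw s (by omega) hsn) ⟨k, hks, h.symm⟩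

lemma exists_adj (hw : IsJumpingWalk Γ n w) {s : ℕ} (hs : 1 ≤ s) (hsn : s < n) :
    ∃ k < s, Γ.Adj (w s) (w k) := by
  obtain ⟨_, ⟨k, hks, rfl⟩, hadj⟩ := exists_adj_of_dSet_eq_one (hw s hs hsn)
  exact ⟨k, hks, hadj⟩

lemma exists_walk (hw : IsJumpingWalk Γ n w) {t : ℕ} (htn : t < n) :
    ∃ W : Γ.Walk (w 0) (w t), ∀ x ∈ W.support, ∃ k ≤ t, w k = x := by
  induction t using Nat.strong_induction_on with
  | _ t ih =>
    rcases Nat.eq_zero_or_pos t with rfl | ht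
    · exact ⟨.nil, fun x hx => ⟨0, le_rfl, by simpa [eq_comm] using hx⟩⟩
    obtain ⟨k, hkt, hadj⟩ := hw.exists_adj ht htn
    obtain ⟨W, hW⟩ := ih k hkt (by omega)
    refine ⟨W.concat hadj.symm, fun x hx => ?_⟩
    rcases List.mem_append.mp (W.support_concat hadj.symm ▸ hx) with hx | hx
    · obtain ⟨k', hk', rfl⟩ := hW x hx
      exact ⟨k', by omega, rfl⟩
    · exact ⟨t, le_rfl, (List.mem_singleton.mp hx).symm⟩

lemma eq_of_adj (hΓ : Γ.IsAcyclic) (hw : IsJumpingWalk Γ n w) {s a b : ℕ} (hsn : s < n)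
    (has : a < s) (hbs : b < s) (ha : Γ.Adj (w s) (w a)) (hb : Γ.Adj (w s) (w b)) :
    a = b := by
  obtain ⟨Wa, hWa⟩ := hw.exists_walk (t := a) (by omega)
  obtain ⟨Wb, hWb⟩ := hw.exists_walk (t := b) (by omega)
  have hv : w s ∉ (Wa.reverse.append Wb).support := by
    intro hs
    rw [Walk.mem_support_append_iff, Walk.support_reverse, List.mem_reverse] at hs
    obtain ⟨k, hks, hk⟩ : ∃ k < s, w k = w s := by
      rcases hs with hs | hs
      · obtain ⟨k, hk, hks⟩ := hWa _ hs
        exact ⟨k, by omega, hks⟩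
      · obtain ⟨k, hk, hks⟩ := hWb _ hs
        exact ⟨k, by omega, hks⟩
    exact hw.ne_of_lt hks hsn hk.symm
  have hab := hΓ.eq_of_adj_of_walk _ hv ha hb
  by_contra hne
  rcases Nat.lt_or_gt_of_ne hne with h | h
  · exact hw.ne_of_lt h (by omega) hab.symm
  · exact hw.ne_of_lt h (by omega) hab

lemma sum_cartan_eq_neg_one (hΓ : Γ.IsAcyclic) (hw : IsJumpingWalk Γ n w) {s : ℕ}
    (hs : 1 ≤ s) (hsn : s < n) : ∑ t ∈ range s, cartan Γ (w t) (w s) = -1 := by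
  obtain ⟨e, hes, hadj⟩ := hw.exists_adj hs hsn
  rw [sum_eq_single_of_mem e (mem_range.mpr hes)]
  · rw [cartan_of_ne (hw.ne_of_lt hes hsn).symm, if_pos hadj.symm]
  · intro t ht hte
    rw [cartan_of_ne (hw.ne_of_lt (mem_range.mp ht) hsn).symm, if_neg]
    exact fun h => hte (hw.eq_of_adj hΓ hsn (mem_range.mp ht) hes h.symm hadj)

end IsJumpingWalk

lemma IsHesitantJumpingWalk.sum_cartan_eq_neg_one {V : Type*} {Γ : SimpleGraph V} {m : ℕ}
    {v : ℕ → V} (hΓ : Γ.IsAcyclic) (hv : IsHesitantJumpingWalk Γ m v) {s : ℕ} (hs : 1 < s)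
    (hsm : s < m) : ∑ t ∈ Ico 1 s, cartan Γ (v t) (v s) = -1 := by
  obtain ⟨s, rfl⟩ : ∃ s', s = s' + 1 := ⟨s - 1, by omega⟩
  have := hv.2.2.sum_cartan_eq_neg_one hΓ (s := s) (by omega) (by omega)
  rw [range_eq_Ico, sum_Ico_add' (fun t => cartan Γ (v t) (v (s + 1)))] at this
  simpa using this

section CartierData

variable {n : ℕ} {c : ℕ → ℕ → ℤ} {ℓ : ℕ → ℤ} {σ : ℕ → Bool}

lemma mSigma_of_false {q : ℕ} (h : σ q = false) : mSigma n c ℓ σ q = 0 := by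
  rw [mSigma, if_neg (by simp [h])]

lemma mSigma_of_true {q : ℕ} (h : σ q = true) :
    mSigma n c ℓ σ q = ℓ q - ∑ k ∈ Ico (q + 1) n, c q k * mSigma n c ℓ σ k := by
  rw [mSigma, if_pos h, sum_attach (Ico (q + 1) n) fun k => c q k * mSigma n c ℓ σ k]

lemma mSigma_subword {m : ℕ} {j : ℕ → ℕ} (hj : StrictMono j) (hjn : ∀ t, t < m → j t < n)
    (hσ : ∀ q, σ q = true ↔ ∃ t < m, j t = q) {t : ℕ} (ht : t < m) :
    mSigma n c ℓ σ (j t) =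
      ℓ (j t) - ∑ s ∈ Ico (t + 1) m, c (j t) (j s) * mSigma n c ℓ σ (j s) := by
  rw [mSigma_of_true ((hσ _).mpr ⟨t, ht, rfl⟩)]
  congr 1
  rw [← sum_image (f := fun k => c (j t) k * mSigma n c ℓ σ k) fun a _ b _ h => hj.injective h]
  refine (sum_subset (fun k hk => ?_) fun k hk hk' => ?_).symm
  · obtain ⟨s, hs, rfl⟩ := mem_image.mp hk
    have hts := (mem_Ico.mp hs).1
    exact mem_Ico.mpr ⟨hj (by omega : t < s), hjn s (mem_Ico.mp hs).2⟩
  · rw [mSigma_of_false, mul_zero]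
    refine Bool.eq_false_iff.mpr fun hσk => hk' ?_
    obtain ⟨s, hs, rfl⟩ := (hσ k).mp hσk
    exact mem_image.mpr ⟨s, mem_Ico.mpr ⟨hj.lt_iff_lt.mp (mem_Ico.mp hk).1, hs⟩, rfl⟩

end CartierData

section TriangularSystem

variable {N : ℕ} {c : ℕ → ℕ → ℤ} {ℓ x : ℕ → ℤ}

/-- Summing the equations, every unknown but the first cancels. -/
lemma head_eq_sum_of_column_sum_eq_neg_one {a : ℕ} (haN : a < N)
    (hx : ∀ t, a ≤ t → t < N → x t = ℓ t - ∑ s ∈ Ico (t + 1) N, c t s * x s)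
    (hc : ∀ s, a < s → s < N → ∑ t ∈ Ico a s, c t s = -1) :
    x a = ∑ t ∈ Ico a N, ℓ t := by
  have hsum : ∑ t ∈ Ico a N, x t =
      ∑ t ∈ Ico a N, ℓ t - ∑ s ∈ Ico a N, (∑ t ∈ Ico a s, c t s) * x s := by
    simp_rw [sum_mul, ← sum_Ico_Ico_comm', ← sum_sub_distrib]
    exact sum_congr rfl fun t ht => hx t (mem_Ico.mp ht).1 (mem_Ico.mp ht).2
  have hcol : ∑ s ∈ Ico (a + 1) N, (∑ t ∈ Ico a s, c t s) * x s =
      -∑ s ∈ Ico (a + 1) N, x s := by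
    rw [← sum_neg_distrib]
    refine sum_congr rfl fun s hs => ?_
    rw [hc s (mem_Ico.mp hs).1 (mem_Ico.mp hs).2, neg_one_mul]
  rw [sum_eq_sum_Ico_succ_bot haN, sum_eq_sum_Ico_succ_bot haN, sum_eq_sum_Ico_succ_bot haN,
    hcol, Ico_self, sum_empty, zero_mul] at hsum
  rw [sum_eq_sum_Ico_succ_bot haN]
  linarith

lemma head_eq_of_row_eq (hN : 1 < N)
    (hx : ∀ t, t < N → x t = ℓ t - ∑ s ∈ Ico (t + 1) N, c t s * x s)
    (hrow : c 0 = c 1) (hdiag : c 1 1 = 2) : x 0 = ℓ 0 - ℓ 1 - x 1 := by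
  have h0 := hx 0 (by omega)
  have h1 := hx 1 hN
  rw [sum_eq_sum_Ico_succ_bot hN, hrow, hdiag] at h0
  linarith

end TriangularSystem

theorem exists_negative_cartier_datum_of_hesitant_jumping_ell_walk_general
    {r n : ℕ} (Γ : SimpleGraph (Fin r)) (hΓ : Γ.IsAcyclic)
    (i : ℕ → Fin r) (ℓ : ℕ → ℤ)
    (m : ℕ) (j : ℕ → ℕ) (hj : StrictMono j) (hjn : ∀ t, t < m → j t < n)
    (hw : IsHesitantJumpingLWalk Γ m (fun t => i (j t)) (fun t => ℓ (j t))) :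
    ∃ (σ : ℕ → Bool) (k : ℕ), k < n ∧
      mSigma n (fun a b => cartan Γ (i a) (i b)) ℓ σ k < 0 := by
  obtain ⟨hv, hsum⟩ := hw
  have hm : 2 ≤ m := hv.1
  let σ : ℕ → Bool := fun q => decide (∃ t < m, j t = q)
  have hσ : ∀ q, σ q = true ↔ ∃ t < m, j t = q := fun _ => decide_eq_true_iff
  set x : ℕ → ℤ := fun t => mSigma n (fun a b => cartan Γ (i a) (i b)) ℓ σ (j t)
  have hx : ∀ t, t < m → x t = ℓ (j t) - ∑ s ∈ Ico (t + 1) m,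
      cartan Γ (i (j t)) (i (j s)) * x s := fun t ht => mSigma_subword hj hjn hσ ht
  have hx1 : x 1 = ∑ t ∈ Ico 1 m, ℓ (j t) :=
    head_eq_sum_of_column_sum_eq_neg_one (by omega) (fun t _ ht => hx t ht)
      fun s hs hsm => hv.sum_cartan_eq_neg_one hΓ hs hsm
  have hx0 : x 0 = ℓ (j 0) - ℓ (j 1) - x 1 :=
    head_eq_of_row_eq hm hx (by simp only [hv.2.1]) (cartan_self _)
  exact ⟨σ, j 0, hjn 0 (by omega), by simp only at hsum; linarith⟩

/-- necessity. If the word `i` has a subword (indexed by the strictly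
increasing sequence `j`) which is a hesitant jumping `ℓ`-walk, then there exist
`σ ∈ {+,-}^n` and an index `k < n` such that `m_{σ,k} < 0`, where the `c_{jk}` are
determined from `i` via the Cartan integers. -/
theorem exists_negative_cartier_datum_of_hesitant_jumping_ell_walk
    {r n : ℕ} (Γ : SimpleGraph (Fin r)) (hΓ : Γ.IsAcyclic)
    (i : ℕ → Fin r) (ℓ : ℕ → ℤ) (hℓ : ∀ j, j < n → 0 ≤ ℓ j)
    (m : ℕ) (j : ℕ → ℕ) (hj : StrictMono j) (hjn : ∀ t, t < m → j t < n)
    (hw : IsHesitantJumpingLWalk Γ m (fun t => i (j t)) (fun t => ℓ (j t))) :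
    ∃ (σ : ℕ → Bool) (k : ℕ), k < n ∧
      mSigma n (fun a b => cartan Γ (i a) (i b)) ℓ σ k < 0 :=
  exists_negative_cartier_datum_of_hesitant_jumping_ell_walk_general Γ hΓ i ℓ m j hj hjn hw
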